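/- Progress for type constructors: every well-kinded type constructor C is either in normal form (where normal forms are base constructors, type variables, lambdas with normal bodies, List/Record/Trace of normal forms, applications and Typerecs stuck on a neutral constructor headed by a type variable, and rows built from normal constructors possibly ending in a row variable or Rmap applied to a neutral row) or there exists C' such that C reduces in one step to C'. -/

import Mathlib

inductive Kind where
  | type | row
  | arrow : Kind → Kind → Kind
deriving DecidableEq

/- Type constructors and row constructors, de Bruijn indices for type/row variables.
   `rapp` applies a constructor of arrow-from-Row kind to a row. -/
mutual
inductive Cn where
  | bool | int | str
  | var : Nat → Cn
  | lam : Kind → Cn → Cn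
  | app : Cn → Cn → Cn
  | rapp : Cn → CRow → Cn
  | list : Cn → Cn
  | record : CRow → Cn
  | trace : Cn → Cn
  | typerec : Cn → Cn → Cn → Cn → Cn → Cn → Cn → Cn
inductive CRow where
  | nil
  | cons : String → Cn → CRow → CRow
  | rvar : Nat → CRow
  | rmap : Cn → CRow → CRow
end

mutual
def renC (f : Nat → Nat) : Cn → Cn
  | .bool => .bool
  | .int => .int
  | .str => .str
  | .var i => .var (f i)
  | .lam K C => .lam K (renC (fun n => match n with | 0 => 0 | n + 1 => f n + 1) C)
  | .app C D => .app (renC f C) (renC f D)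
  | .rapp C S => .rapp (renC f C) (renR f S)
  | .list C => .list (renC f C)
  | .record S => .record (renR f S)
  | .trace C => .trace (renC f C)
  | .typerec C cb ci cs cl cr ct =>
      .typerec (renC f C) (renC f cb) (renC f ci) (renC f cs) (renC f cl) (renC f cr) (renC f ct)
def renR (f : Nat → Nat) : CRow → CRow
  | .nil => .nil
  | .cons l C S => .cons l (renC f C) (renR f S)
  | .rvar i => .rvar (f i)
  | .rmap C S => .rmap (renC f C) (renR f S)
end

def shiftC : Cn → Cn := renC Nat.succ
def shiftR : CRow → CRow := renR Nat.succ

/- Parallel substitution: σ gives constructors for type variables,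
   τ gives rows for row variables (both share one de Bruijn context). -/
def extsC (σ : Nat → Cn) : Nat → Cn
  | 0 => .var 0
  | n + 1 => shiftC (σ n)

def extsR (τ : Nat → CRow) : Nat → CRow
  | 0 => .rvar 0
  | n + 1 => shiftR (τ n)

mutual
def subC (σ : Nat → Cn) (τ : Nat → CRow) : Cn → Cn
  | .bool => .bool
  | .int => .int
  | .str => .str
  | .var i => σ i
  | .lam K C => .lam K (subC (extsC σ) (extsR τ) C)
  | .app C D => .app (subC σ τ C) (subC σ τ D)
  | .rapp C S => .rapp (subC σ τ C) (subR σ τ S)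
  | .list C => .list (subC σ τ C)
  | .record S => .record (subR σ τ S)
  | .trace C => .trace (subC σ τ C)
  | .typerec C cb ci cs cl cr ct =>
      .typerec (subC σ τ C) (subC σ τ cb) (subC σ τ ci) (subC σ τ cs)
        (subC σ τ cl) (subC σ τ cr) (subC σ τ ct)
def subR (σ : Nat → Cn) (τ : Nat → CRow) : CRow → CRow
  | .nil => .nil
  | .cons l C S => .cons l (subC σ τ C) (subR σ τ S)
  | .rvar i => τ i
  | .rmap C S => .rmap (subC σ τ C) (subR σ τ S)
end

/- Single substitution of a constructor D for variable 0: C[α := D]. -/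
def subC1 (D : Cn) (C : Cn) : Cn :=
  subC (fun n => match n with | 0 => D | n + 1 => .var n)
       (fun n => match n with | 0 => .rvar 0 | n + 1 => .rvar n) C

/- Single substitution of a row S for variable 0. -/
def subCRow1 (S : CRow) (C : Cn) : Cn :=
  subC (fun n => match n with | 0 => .var 0 | n + 1 => .var n)
       (fun n => match n with | 0 => S | n + 1 => .rvar n) C

/- Kinding of constructors and row constructors. -/
mutual
inductive CKind : List Kind → Cn → Kind → Prop
  | bool {Γ} : CKind Γ .bool .type
  | int {Γ} : CKind Γ .int .type
  | str {Γ} : CKind Γ .str .type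
  | var {Γ i K} : Γ[i]? = some K → K ≠ .row → CKind Γ (.var i) K
  | lam {Γ K1 K2 C} : CKind (K1 :: Γ) C K2 → CKind Γ (.lam K1 C) (.arrow K1 K2)
  | app {Γ C D K1 K2} : CKind Γ C (.arrow K1 K2) → CKind Γ D K1 →
      CKind Γ (.app C D) K2
  | rapp {Γ C S K} : CKind Γ C (.arrow .row K) → RKind Γ S →
      CKind Γ (.rapp C S) K
  | list {Γ C} : CKind Γ C .type → CKind Γ (.list C) .type
  | record {Γ S} : RKind Γ S → CKind Γ (.record S) .type
  | trace {Γ C} : CKind Γ C .type → CKind Γ (.trace C) .type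
  | typerec {Γ C cb ci cs cl cr ct K} :
      CKind Γ C .type →
      CKind Γ cb K → CKind Γ ci K → CKind Γ cs K →
      CKind Γ cl (.arrow .type (.arrow K K)) →
      CKind Γ cr (.arrow .row (.arrow .row K)) →
      CKind Γ ct (.arrow .type (.arrow K K)) →
      CKind Γ (.typerec C cb ci cs cl cr ct) K
inductive RKind : List Kind → CRow → Prop
  | nil {Γ} : RKind Γ .nil
  | cons {Γ l C S} : CKind Γ C .type → RKind Γ S → RKind Γ (.cons l C S)
  | rvar {Γ i} : Γ[i]? = some .row → RKind Γ (.rvar i)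
  | rmap {Γ C S} : CKind Γ C (.arrow .type .type) → RKind Γ S →
      RKind Γ (.rmap C S)
end

/- Type-level reduction on constructors and rows: beta rules for application,
   Rmap unrolling, Typerec beta rules, plus full congruence rules. -/
mutual
inductive CStep : Cn → Cn → Prop
  | beta {K C D} : CStep (.app (.lam K C) D) (subC1 D C)
  | rbeta {K C S} : CStep (.rapp (.lam K C) S) (subCRow1 S C)
  | trBool {cb ci cs cl cr ct} : CStep (.typerec .bool cb ci cs cl cr ct) cb
  | trInt {cb ci cs cl cr ct} : CStep (.typerec .int cb ci cs cl cr ct) ci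
  | trStr {cb ci cs cl cr ct} : CStep (.typerec .str cb ci cs cl cr ct) cs
  | trList {D cb ci cs cl cr ct} :
      CStep (.typerec (.list D) cb ci cs cl cr ct)
        (.app (.app cl D) (.typerec D cb ci cs cl cr ct))
  | trRecord {S cb ci cs cl cr ct} :
      CStep (.typerec (.record S) cb ci cs cl cr ct)
        (.rapp (.rapp cr S)
          (.rmap (.lam .type
            (.typerec (.var 0) (shiftC cb) (shiftC ci) (shiftC cs)
              (shiftC cl) (shiftC cr) (shiftC ct))) S))
  | trTrace {D cb ci cs cl cr ct} :
      CStep (.typerec (.trace D) cb ci cs cl cr ct)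
        (.app (.app ct D) (.typerec D cb ci cs cl cr ct))
  -- congruences
  | lam {K C C'} : CStep C C' → CStep (.lam K C) (.lam K C')
  | app₁ {C C' D} : CStep C C' → CStep (.app C D) (.app C' D)
  | app₂ {C D D'} : CStep D D' → CStep (.app C D) (.app C D')
  | rapp₁ {C C' S} : CStep C C' → CStep (.rapp C S) (.rapp C' S)
  | rapp₂ {C S S'} : RStep S S' → CStep (.rapp C S) (.rapp C S')
  | list {C C'} : CStep C C' → CStep (.list C) (.list C')
  | record {S S'} : RStep S S' → CStep (.record S) (.record S')
  | trace {C C'} : CStep C C' → CStep (.trace C) (.trace C')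
  | typerec₀ {C C' cb ci cs cl cr ct} : CStep C C' →
      CStep (.typerec C cb ci cs cl cr ct) (.typerec C' cb ci cs cl cr ct)
  | typerecB {C cb cb' ci cs cl cr ct} : CStep cb cb' →
      CStep (.typerec C cb ci cs cl cr ct) (.typerec C cb' ci cs cl cr ct)
  | typerecI {C cb ci ci' cs cl cr ct} : CStep ci ci' →
      CStep (.typerec C cb ci cs cl cr ct) (.typerec C cb ci' cs cl cr ct)
  | typerecS {C cb ci cs cs' cl cr ct} : CStep cs cs' →
      CStep (.typerec C cb ci cs cl cr ct) (.typerec C cb ci cs' cl cr ct)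
  | typerecL {C cb ci cs cl cl' cr ct} : CStep cl cl' →
      CStep (.typerec C cb ci cs cl cr ct) (.typerec C cb ci cs cl' cr ct)
  | typerecR {C cb ci cs cl cr cr' ct} : CStep cr cr' →
      CStep (.typerec C cb ci cs cl cr ct) (.typerec C cb ci cs cl cr' ct)
  | typerecT {C cb ci cs cl cr ct ct'} : CStep ct ct' →
      CStep (.typerec C cb ci cs cl cr ct) (.typerec C cb ci cs cl cr ct')
inductive RStep : CRow → CRow → Prop
  | rmapNil {C} : RStep (.rmap C .nil) .nil
  | rmapCons {C l D S} :
      RStep (.rmap C (.cons l D S)) (.cons l (.app C D) (.rmap C S))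
  | cons₁ {l C C' S} : CStep C C' → RStep (.cons l C S) (.cons l C' S)
  | cons₂ {l C S S'} : RStep S S' → RStep (.cons l C S) (.cons l C S')
  | rmap₁ {C C' S} : CStep C C' → RStep (.rmap C S) (.rmap C' S)
  | rmap₂ {C S S'} : RStep S S' → RStep (.rmap C S) (.rmap C S')
end

/- Normal and neutral constructors and rows. -/
mutual
inductive NeCn : Cn → Prop
  | var {i} : NeCn (.var i)
  | app {E C} : NeCn E → NCn C → NeCn (.app E C)
  | rapp {E S} : NeCn E → NRow S → NeCn (.rapp E S)
  | typerec {E cb ci cs cl cr ct} : NeCn E →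
      NCn cb → NCn ci → NCn cs → NCn cl → NCn cr → NCn ct →
      NeCn (.typerec E cb ci cs cl cr ct)
inductive NCn : Cn → Prop
  | ne {E} : NeCn E → NCn E
  | bool : NCn .bool
  | int : NCn .int
  | str : NCn .str
  | lam {K C} : NCn C → NCn (.lam K C)
  | list {C} : NCn C → NCn (.list C)
  | record {S} : NRow S → NCn (.record S)
  | trace {C} : NCn C → NCn (.trace C)
inductive NRow : CRow → Prop
  | nil : NRow .nil
  | cons {l C S} : NCn C → NRow S → NRow (.cons l C S)
  | ne {U} : NeRow U → NRow U
inductive NeRow : CRow → Prop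
  | rvar {i} : NeRow (.rvar i)
  | cons {l C U} : NCn C → NeRow U → NeRow (.cons l C U)
  | rmap {C U} : NCn C → NeRow U → NeRow (.rmap C U)
end

/-!
Mutual induction on kinding. If some immediate subterm steps, so does the whole term by a
congruence rule; otherwise every subterm is normal, and the kinds force the canonical forms
that make the head either stuck or a redex: a normal constructor of arrow kind is neutral or
a λ, a normal constructor of kind Type is neutral or headed by Bool, Int, String, List,
Record or Trace, and a normal row is neutral or built from `·` and `l : C; S`.
-/

def CProgress (C : Cn) : Prop := NCn C ∨ ∃ C', CStep C C'

def RProgress (S : CRow) : Prop := NRow S ∨ ∃ S', RStep S S'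

section CanonicalForms

variable {Γ : List Kind} {C : Cn}

theorem NCn.neCn_or_lam_of_arrow {K₁ K₂ : Kind} (hn : NCn C)
    (hk : CKind Γ C (.arrow K₁ K₂)) : NeCn C ∨ ∃ K B, C = .lam K B := by
  cases hn with
  | ne hE => exact .inl hE
  | lam _ => exact .inr ⟨_, _, rfl⟩
  | bool | int | str | list _ | record _ | trace _ => cases hk

theorem NCn.neCn_or_typerec_step {cb ci cs cl cr ct : Cn} (hn : NCn C)
    (hk : CKind Γ C .type) :
    NeCn C ∨ ∃ C', CStep (.typerec C cb ci cs cl cr ct) C' := by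
  cases hn with
  | ne hE => exact .inl hE
  | lam _ => cases hk
  | bool => exact .inr ⟨_, .trBool⟩
  | int => exact .inr ⟨_, .trInt⟩
  | str => exact .inr ⟨_, .trStr⟩
  | list _ => exact .inr ⟨_, .trList⟩
  | record _ => exact .inr ⟨_, .trRecord⟩
  | trace _ => exact .inr ⟨_, .trTrace⟩

theorem NRow.neRow_or_rmap_step {S : CRow} (hn : NRow S) :
    NeRow S ∨ ∃ S', RStep (.rmap C S) S' := by
  cases hn with
  | nil => exact .inr ⟨_, .rmapNil⟩
  | cons _ _ => exact .inr ⟨_, .rmapCons⟩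
  | ne hU => exact .inl hU

end CanonicalForms

section Congruence

variable {Γ : List Kind} {C D cb ci cs cl cr ct : Cn} {S : CRow} {K : Kind}

theorem CProgress.lam (h : CProgress C) : CProgress (.lam K C) :=
  h.imp .lam fun ⟨_, s⟩ => ⟨_, .lam s⟩

theorem CProgress.list (h : CProgress C) : CProgress (.list C) :=
  h.imp .list fun ⟨_, s⟩ => ⟨_, .list s⟩

theorem CProgress.trace (h : CProgress C) : CProgress (.trace C) :=
  h.imp .trace fun ⟨_, s⟩ => ⟨_, .trace s⟩

theorem CProgress.record (h : RProgress S) : CProgress (.record S) :=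
  h.imp .record fun ⟨_, s⟩ => ⟨_, .record s⟩

theorem CProgress.app {K₁ K₂ : Kind} (hk : CKind Γ C (.arrow K₁ K₂)) (hC : CProgress C)
    (hD : CProgress D) : CProgress (.app C D) := by
  refine or_iff_not_imp_right.2 fun stuck => ?_
  have hC := hC.resolve_right fun ⟨_, s⟩ => stuck ⟨_, .app₁ s⟩
  have hD := hD.resolve_right fun ⟨_, s⟩ => stuck ⟨_, .app₂ s⟩
  obtain hE | ⟨_, _, rfl⟩ := hC.neCn_or_lam_of_arrow hk
  exacts [.ne (.app hE hD), (stuck ⟨_, .beta⟩).elim]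

theorem CProgress.rapp (hk : CKind Γ C (.arrow .row K)) (hC : CProgress C)
    (hS : RProgress S) : CProgress (.rapp C S) := by
  refine or_iff_not_imp_right.2 fun stuck => ?_
  have hC := hC.resolve_right fun ⟨_, s⟩ => stuck ⟨_, .rapp₁ s⟩
  have hS := hS.resolve_right fun ⟨_, s⟩ => stuck ⟨_, .rapp₂ s⟩
  obtain hE | ⟨_, _, rfl⟩ := hC.neCn_or_lam_of_arrow hk
  exacts [.ne (.rapp hE hS), (stuck ⟨_, .rbeta⟩).elim]

theorem CProgress.typerec (hk : CKind Γ C .type) (hC : CProgress C) (hb : CProgress cb)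
    (hi : CProgress ci) (hs : CProgress cs) (hl : CProgress cl) (hr : CProgress cr)
    (ht : CProgress ct) : CProgress (.typerec C cb ci cs cl cr ct) := by
  refine or_iff_not_imp_right.2 fun stuck => ?_
  have hC := hC.resolve_right fun ⟨_, s⟩ => stuck ⟨_, .typerec₀ s⟩
  obtain hE | step := hC.neCn_or_typerec_step (cb := cb) (ci := ci) (cs := cs) (cl := cl)
    (cr := cr) (ct := ct) hk
  · exact .ne <| .typerec hE
      (hb.resolve_right fun ⟨_, s⟩ => stuck ⟨_, .typerecB s⟩)
      (hi.resolve_right fun ⟨_, s⟩ => stuck ⟨_, .typerecI s⟩)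
      (hs.resolve_right fun ⟨_, s⟩ => stuck ⟨_, .typerecS s⟩)
      (hl.resolve_right fun ⟨_, s⟩ => stuck ⟨_, .typerecL s⟩)
      (hr.resolve_right fun ⟨_, s⟩ => stuck ⟨_, .typerecR s⟩)
      (ht.resolve_right fun ⟨_, s⟩ => stuck ⟨_, .typerecT s⟩)
  · exact (stuck step).elim

theorem RProgress.cons {l : String} (hC : CProgress C) (hS : RProgress S) :
    RProgress (.cons l C S) := by
  refine or_iff_not_imp_right.2 fun stuck => .cons ?_ ?_
  exacts [hC.resolve_right fun ⟨_, s⟩ => stuck ⟨_, .cons₁ s⟩,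
    hS.resolve_right fun ⟨_, s⟩ => stuck ⟨_, .cons₂ s⟩]

theorem RProgress.rmap (hC : CProgress C) (hS : RProgress S) : RProgress (.rmap C S) := by
  refine or_iff_not_imp_right.2 fun stuck => ?_
  have hC := hC.resolve_right fun ⟨_, s⟩ => stuck ⟨_, .rmap₁ s⟩
  have hS := hS.resolve_right fun ⟨_, s⟩ => stuck ⟨_, .rmap₂ s⟩
  obtain hU | step := hS.neRow_or_rmap_step (C := C)
  exacts [.ne (.rmap hC hU), (stuck step).elim]

end Congruence

mutual

theorem CKind.progress {Γ : List Kind} {C : Cn} {K : Kind} : CKind Γ C K → CProgress C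
  | .bool => .inl .bool
  | .int => .inl .int
  | .str => .inl .str
  | .var _ _ => .inl (.ne .var)
  | .lam h => h.progress.lam
  | .app hC hD => .app hC hC.progress hD.progress
  | .rapp hC hS => .rapp hC hC.progress hS.progress
  | .list h => h.progress.list
  | .record h => .record h.progress
  | .trace h => h.progress.trace
  | .typerec h hb hi hs hl hr ht =>
      .typerec h h.progress hb.progress hi.progress hs.progress hl.progress hr.progress
        ht.progress

theorem RKind.progress {Γ : List Kind} {S : CRow} : RKind Γ S → RProgress S
  | .nil => .inl .nil
  | .cons hC hS => .cons hC.progress hS.progress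
  | .rvar _ => .inl (.ne .rvar)
  | .rmap hC hS => .rmap hC.progress hS.progress

end

theorem constructor_progress {Γ : List Kind} {C : Cn} {K : Kind}
    (hk : CKind Γ C K) : NCn C ∨ ∃ C', CStep C C' :=
  hk.progress
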